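/- arXiv:0902.0844 — 3 statements merged into one kernel-verified Lean document; each statement's English description precedes it below -/
import Mathlib

section
/- Let K be a difference subfield of U (σ(K) ⊆ K) and a a finite tuple from U with σ(a) ∈ K(a)^alg. Then there is a constant D' ∈ ℕ such that for every k > 0, μ(σ^k(a)/K(a)) ≤ D'·μ(σ^k(a)/K^inv(a)). -/
/- Setting: a large algebraically closed field `U` with an automorphism `σ`.
   Tuples are maps `Fin n → U`; for a tuple `t`, the relevant set of coordinates
   is `Set.range t`.  `fAdj E s` is the subfield `E(s)` generated by a subfield
   `E` and a set `s`, and `deg E s` is the degree `μ(s/E) = [E(s):E]`. -/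

set_option maxHeartbeats 1000000
set_option synthInstance.maxHeartbeats 1000000

open Filter Set

variable {U : Type*}

/-- The subfield `E(s)` generated by the subfield `E` and the set `s`. -/
noncomputable def fAdj [Field U] (E : Subfield U) (s : Set U) : Subfield U :=
  (IntermediateField.adjoin E s).toSubfield

/-- The degree `μ(s/E) = [E(s):E]` (as `Module.finrank`; it is `0` when infinite). -/
noncomputable def deg [Field U] (E : Subfield U) (s : Set U) : ℕ :=
  Module.finrank E (IntermediateField.adjoin E s)

/-- `k ↦ μ(σ^{k+1}(s) / K(s, σ(s), …, σ^k(s)))`: the sequence whose eventual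
value is the limit degree `ld(s/K)`. -/
noncomputable def ldSeq [Field U] (σ : U ≃+* U) (K : Subfield U) (s : Set U) (k : ℕ) : ℕ :=
  deg (fAdj K (⋃ i ∈ Set.Iic k, ⇑(σ ^ i) '' s)) (⇑(σ ^ (k + 1)) '' s)

/-- `k ↦ μ(σ^k(s) / K(s))`: the sequence whose `k`-th roots converge to the
distant degree `dd(s/K)`. -/
noncomputable def ddSeq [Field U] (σ : U ≃+* U) (K : Subfield U) (s : Set U) (k : ℕ) : ℕ :=
  deg (fAdj K s) (⇑(σ ^ k) '' s)

/-- The inversive closure `K^inv = ⋃ₙ σ^{-n}(K)`. -/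
noncomputable def Kinv [Field U] (σ : U ≃+* U) (K : Subfield U) : Subfield U :=
  ⨆ n : ℕ, K.map (σ⁻¹ ^ n : U ≃+* U).toRingHom

/-- The difference field `K(s)_σ = K(σ^i(s) : i ∈ ℕ)` generated by `s` over `K`. -/
noncomputable def diffAdj [Field U] (σ : U ≃+* U) (K : Subfield U) (s : Set U) : Subfield U :=
  fAdj K (⋃ i : ℕ, ⇑(σ ^ i) '' s)

/-
Write `Tₖ = s ∪ σ(s) ∪ ⋯ ∪ σᵏ(s)` (`orbitSegment σ s k`) and
`dᵢ(L) = μ(σ^{i+1}(s) / L(Tᵢ))` (`ldSeq σ L s i`). By the tower law,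
`∏_{i<k} dᵢ(L) = μ(Tₖ/L(s)) = μ(σᵏ(s)/L(s)) · μ(Tₖ/L(s, σᵏ(s)))`, and the last factor can
only drop when `K` is replaced by `K^inv`. Since `σ` maps `K(Tᵢ)` into `K(T_{i+1})`, the
sequence `dᵢ(K)` is non-increasing, hence constant from some `N` on. The minimal polynomials
over `K^inv(Tᵢ)` already live over some `σ^{-m}(K)(Tᵢ)`, and moving them by `σᵐ` gives
`d_{m+i}(K) ≤ dᵢ(K^inv)`. So `dᵢ(K) ≤ dᵢ(K^inv)` for `i ≥ N`, and `D' = ∏_{i<N} dᵢ(K)` works.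
-/

open Polynomial

section FieldAdjoin

variable [Field U] {E F : Subfield U} {S T : Set U}

theorem fAdj_eq_closure (E : Subfield U) (S : Set U) :
    fAdj E S = Subfield.closure (E ∪ S) := by
  show (IntermediateField.adjoin E S).toSubfield = _
  rw [IntermediateField.adjoin_toSubfield,
    show Set.range (algebraMap E U) = E from Subtype.range_coe]

theorem fAdj_le_iff {G : Subfield U} : fAdj E S ≤ G ↔ E ≤ G ∧ S ⊆ G := by
  rw [fAdj_eq_closure, Subfield.closure_le, Set.union_subset_iff, SetLike.coe_subset_coe]

theorem le_fAdj : E ≤ fAdj E S := (fAdj_le_iff.mp le_rfl).1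

theorem subset_fAdj : S ⊆ fAdj E S := (fAdj_le_iff.mp le_rfl).2

theorem fAdj_mono (hEF : E ≤ F) (hST : S ⊆ T) : fAdj E S ≤ fAdj F T :=
  fAdj_le_iff.mpr ⟨hEF.trans le_fAdj, hST.trans subset_fAdj⟩

theorem fAdj_fAdj : fAdj (fAdj E S) T = fAdj E (S ∪ T) :=
  le_antisymm
    (fAdj_le_iff.mpr ⟨fAdj_mono le_rfl Set.subset_union_left,
      Set.subset_union_right.trans subset_fAdj⟩)
    (fAdj_le_iff.mpr ⟨le_fAdj.trans le_fAdj,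
      Set.union_subset (subset_fAdj.trans (SetLike.coe_subset_coe.mpr le_fAdj)) subset_fAdj⟩)

theorem fAdj_fAdj_of_subset (h : S ⊆ T) : fAdj (fAdj E S) T = fAdj E T := by
  rw [fAdj_fAdj, Set.union_eq_self_of_subset_left h]

theorem fAdj_iSup (F : ℕ → Subfield U) (T : Set U) :
    fAdj (⨆ n, F n) T = ⨆ n, fAdj (F n) T :=
  le_antisymm
    (fAdj_le_iff.mpr ⟨iSup_mono fun _ => le_fAdj,
      subset_fAdj.trans (SetLike.coe_subset_coe.mpr (le_iSup (fun n => fAdj (F n) T) 0))⟩)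
    (iSup_le fun n => fAdj_mono (le_iSup F n) subset_rfl)

theorem map_fAdj (f : U →+* U) (E : Subfield U) (S : Set U) :
    (fAdj E S).map f = fAdj (E.map f) (f '' S) := by
  rw [fAdj_eq_closure, fAdj_eq_closure, RingHom.map_field_closure, Set.image_union,
    Subfield.coe_map]

end FieldAdjoin

section Integrality

variable [Field U] {E F : Subfield U} {t : U}

theorem isIntegral_of_le (h : E ≤ F) (ht : IsIntegral E t) : IsIntegral F t :=
  ht.map_of_comp_eq (Subfield.inclusion h) (RingHom.id U) rfl

theorem isIntegral_map (f : U →+* U) (ht : IsIntegral E t) : IsIntegral (E.map f) (f t) :=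
  ht.map_of_comp_eq ((f.comp E.subtype).codRestrict (E.map f) fun x => ⟨x, x.2, rfl⟩) f rfl

theorem natDegree_minpoly_le_of_le (h : E ≤ F) (ht : IsIntegral E t) :
    (minpoly F t).natDegree ≤ (minpoly E t).natDegree := by
  have hroot : aeval t ((minpoly E t).map (Subfield.inclusion h)) = 0 := by
    rw [aeval_def, eval₂_map]
    exact minpoly.aeval E t
  calc (minpoly F t).natDegree
      ≤ ((minpoly E t).map (Subfield.inclusion h)).natDegree :=
        natDegree_le_natDegree (minpoly.min F t ((minpoly.monic ht).map _) hroot)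
    _ = (minpoly E t).natDegree := natDegree_map _

theorem exists_natDegree_minpoly_le_iSup {F : ℕ → Subfield U} (hF : Monotone F)
    (ht : IsIntegral ↥(⨆ n, F n) t) :
    ∃ n, (minpoly (F n) t).natDegree ≤ (minpoly ↥(⨆ n, F n) t).natDegree := by
  classical
  set P := (minpoly ↥(⨆ n, F n) t).map (algebraMap ↥(⨆ n, F n) U) with hP
  have hcoeffs : (P.coeffs : Set U) ⊆ ⋃ n, (F n : Set U) := by
    rw [← Subfield.coe_iSup_of_directed hF.directed_le]
    intro c hc
    obtain ⟨i, -, rfl⟩ := Finset.mem_image.mp hc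
    rw [hP, coeff_map]
    exact SetLike.coe_mem _
  obtain ⟨n, hn⟩ := Directed.exists_mem_subset_of_finset_subset_biUnion
    (SetLike.coe_mono.comp hF).directed_le hcoeffs
  have hlifts : P ∈ lifts (algebraMap (F n) U) := by
    refine (lifts_iff_coeff_lifts P).mpr fun i => ?_
    by_cases hi : P.coeff i = 0
    · exact ⟨0, hi ▸ map_zero _⟩
    · exact ⟨⟨_, hn (coeff_mem_coeffs hi)⟩, rfl⟩
  obtain ⟨q, hqP, hqdeg, hqmonic⟩ :=
    lifts_and_natDegree_eq_and_monic hlifts ((minpoly.monic ht).map _)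
  have hroot : aeval t q = 0 := by
    rw [aeval_def, eval₂_eq_eval_map, hqP, hP, eval_map, ← aeval_def, minpoly.aeval]
  refine ⟨n, ?_⟩
  calc (minpoly (F n) t).natDegree ≤ q.natDegree :=
        natDegree_le_natDegree (minpoly.min _ t hqmonic hroot)
    _ = _ := by rw [hqdeg, hP, natDegree_map]

end Integrality

section Degree

variable [Field U] {E F : Subfield U} {S T : Set U}

theorem deg_eq_relfinrank (E : Subfield U) (S : Set U) :
    deg E S = E.relfinrank (fAdj E S) := by
  rw [Subfield.relfinrank_eq_finrank_of_le le_fAdj]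
  rfl

theorem deg_union (E : Subfield U) (S T : Set U) :
    deg E (S ∪ T) = deg E S * deg (fAdj E S) T := by
  rw [deg_eq_relfinrank, deg_eq_relfinrank, deg_eq_relfinrank, fAdj_fAdj]
  exact (Subfield.relfinrank_mul_relfinrank le_fAdj (fAdj_mono le_rfl Set.subset_union_left)).symm

theorem deg_of_subset (h : S ⊆ E) : deg E S = 1 := by
  rw [deg_eq_relfinrank, Subfield.relfinrank_eq_one_iff]
  exact fAdj_le_iff.mpr ⟨le_rfl, h⟩

theorem deg_map (f : U →+* U) (E : Subfield U) (S : Set U) :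
    deg (E.map f) (f '' S) = deg E S := by
  rw [deg_eq_relfinrank, deg_eq_relfinrank, ← map_fAdj]
  exact Subfield.relfinrank_map_map E (fAdj E S) f

theorem deg_insert {a : U} (ha : IsIntegral (fAdj E S) a) :
    deg E (insert a S) = deg E S * (minpoly (fAdj E S) a).natDegree := by
  rw [Set.insert_eq, Set.union_comm, deg_union]
  exact congrArg _ (IntermediateField.adjoin.finrank ha)

theorem deg_pos (hS : S.Finite) (h : ∀ x ∈ S, IsIntegral E x) : 0 < deg E S := by
  have := hS.to_subtype
  have : FiniteDimensional E (IntermediateField.adjoin E S) :=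
    IntermediateField.finiteDimensional_adjoin h
  exact Module.finrank_pos

theorem isIntegral_of_mem_fAdj (h : 0 < deg E S) {x : U} (hx : x ∈ fAdj E S) :
    IsIntegral E x := by
  have : Module.Finite E (IntermediateField.adjoin E S) := Module.finite_of_finrank_pos h
  exact (IsIntegral.of_finite E (⟨x, hx⟩ : IntermediateField.adjoin E S)).map
    (IsScalarTower.toAlgHom E (IntermediateField.adjoin E S) U)

theorem deg_le_of_le (hEF : E ≤ F) (hS : S.Finite) (hint : ∀ x ∈ S, IsIntegral E x) :
    deg F S ≤ deg E S := by
  induction S, hS using Set.Finite.induction_on with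
  | empty => rw [deg_of_subset (Set.empty_subset _), deg_of_subset (Set.empty_subset _)]
  | @insert a S _ _ ih =>
    have hES : fAdj E S ≤ fAdj F S := fAdj_mono hEF subset_rfl
    have ha : IsIntegral (fAdj E S) a := isIntegral_of_le le_fAdj (hint a (Set.mem_insert a S))
    rw [deg_insert ha, deg_insert (isIntegral_of_le hES ha)]
    exact Nat.mul_le_mul (ih fun x hx => hint x (Set.mem_insert_of_mem a hx))
      (natDegree_minpoly_le_of_le hES ha)

theorem deg_image_le_of_map_le (f : U →+* U) (hf : E.map f ≤ F) (hS : S.Finite)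
    (hint : ∀ x ∈ S, IsIntegral E x) : deg F (f '' S) ≤ deg E S :=
  calc deg F (f '' S) ≤ deg (E.map f) (f '' S) :=
        deg_le_of_le hf (hS.image f) (Set.forall_mem_image.mpr fun x hx =>
          isIntegral_map f (hint x hx))
    _ = deg E S := deg_map f E S

theorem exists_deg_le_deg_iSup {F : ℕ → Subfield U} (hF : Monotone F) (hT : T.Finite)
    (hint : ∀ x ∈ T, IsIntegral (F 0) x) : ∃ n, deg (F n) T ≤ deg (⨆ n, F n) T := by
  induction T, hT using Set.Finite.induction_on with
  | empty => exact ⟨0, (deg_of_subset (Set.empty_subset _)).le.trans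
      (deg_of_subset (Set.empty_subset _)).ge⟩
  | @insert a T _ hT ih =>
    have hintT : ∀ x ∈ T, IsIntegral (F 0) x := fun x hx => hint x (Set.mem_insert_of_mem a hx)
    have hFT : Monotone fun n => fAdj (F n) T := fun _ _ h => fAdj_mono (hF h) subset_rfl
    have ha : ∀ n, IsIntegral (fAdj (F n) T) a := fun n =>
      isIntegral_of_le (fAdj_mono (hF (Nat.zero_le n)) subset_rfl)
        (isIntegral_of_le le_fAdj (hint a (Set.mem_insert a T)))
    have haSup : IsIntegral ↥(⨆ n, fAdj (F n) T) a := isIntegral_of_le (le_iSup _ 0) (ha 0)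
    obtain ⟨n₁, hn₁⟩ := ih hintT
    obtain ⟨n₂, hn₂⟩ := exists_natDegree_minpoly_le_iSup hFT haSup
    rw [← fAdj_iSup] at haSup hn₂
    refine ⟨max n₁ n₂, ?_⟩
    rw [deg_insert (ha _), deg_insert haSup]
    refine Nat.mul_le_mul ?_ ?_
    · exact (deg_le_of_le (hF (le_max_left _ _)) hT fun x hx =>
        isIntegral_of_le (hF (Nat.zero_le _)) (hintT x hx)).trans hn₁
    · exact (natDegree_minpoly_le_of_le (hFT (le_max_right _ _)) (ha n₂)).trans hn₂

end Degree

section OrbitSegment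

variable [Field U] (σ : U ≃+* U) (s : Set U)

def orbitSegment (k : ℕ) : Set U :=
  ⋃ i ∈ Set.Iic k, ⇑(σ ^ i) '' s

theorem image_pow_image (a b : ℕ) (X : Set U) :
    ⇑(σ ^ a) '' (⇑(σ ^ b) '' X) = ⇑(σ ^ (a + b)) '' X := by
  rw [Set.image_image, pow_add]
  rfl

theorem mem_orbitSegment {x : U} {k : ℕ} :
    x ∈ orbitSegment σ s k ↔ ∃ i ≤ k, x ∈ ⇑(σ ^ i) '' s := by
  simp [orbitSegment]

theorem image_pow_subset_orbitSegment {i k : ℕ} (h : i ≤ k) :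
    ⇑(σ ^ i) '' s ⊆ orbitSegment σ s k :=
  fun _ hx => (mem_orbitSegment σ s).mpr ⟨i, h, hx⟩

theorem subset_orbitSegment (k : ℕ) : s ⊆ orbitSegment σ s k := by
  simpa using image_pow_subset_orbitSegment σ s (Nat.zero_le k)

theorem orbitSegment_zero : orbitSegment σ s 0 = s := by
  simp [orbitSegment]

theorem orbitSegment_succ (k : ℕ) :
    orbitSegment σ s (k + 1) = orbitSegment σ s k ∪ ⇑(σ ^ (k + 1)) '' s := by
  ext x
  simp only [mem_orbitSegment, Set.mem_union, Nat.le_succ_iff, or_and_right, exists_or,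
    exists_eq_left]

theorem orbitSegment_finite (hs : s.Finite) (k : ℕ) : (orbitSegment σ s k).Finite :=
  (Set.finite_Iic k).biUnion fun _ _ => hs.image _

theorem image_orbitSegment_subset (m i : ℕ) :
    ⇑(σ ^ m) '' orbitSegment σ s i ⊆ orbitSegment σ s (m + i) := by
  rintro _ ⟨y, hy, rfl⟩
  obtain ⟨j, hj, hyj⟩ := (mem_orbitSegment σ s).mp hy
  refine image_pow_subset_orbitSegment σ s (Nat.add_le_add_left hj m) ?_
  rw [← image_pow_image]
  exact Set.mem_image_of_mem _ hyj

theorem ldSeq_eq_deg (K : Subfield U) (k : ℕ) :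
    ldSeq σ K s k = deg (fAdj K (orbitSegment σ s k)) (⇑(σ ^ (k + 1)) '' s) := rfl

theorem deg_orbitSegment_eq_prod (K : Subfield U) (k : ℕ) :
    deg (fAdj K s) (orbitSegment σ s k) = ∏ i ∈ Finset.range k, ldSeq σ K s i := by
  induction k with
  | zero => rw [orbitSegment_zero, Finset.prod_range_zero, deg_of_subset subset_fAdj]
  | succ k ih =>
    rw [orbitSegment_succ, deg_union, ih, fAdj_fAdj_of_subset (subset_orbitSegment σ s k),
      Finset.prod_range_succ, ldSeq_eq_deg]

theorem deg_orbitSegment_eq_ddSeq_mul (K : Subfield U) (k : ℕ) :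
    deg (fAdj K s) (orbitSegment σ s k) =
      ddSeq σ K s k * deg (fAdj K (s ∪ ⇑(σ ^ k) '' s)) (orbitSegment σ s k) := by
  rw [ddSeq, ← fAdj_fAdj, ← deg_union, Set.union_eq_self_of_subset_left
    (image_pow_subset_orbitSegment σ s le_rfl)]

end OrbitSegment

section InversiveClosure

variable [Field U] {σ : U ≃+* U} {K : Subfield U}

theorem pow_apply_mem (hK : ∀ x ∈ K, σ x ∈ K) (m : ℕ) {x : U} (hx : x ∈ K) : (σ ^ m) x ∈ K := by
  induction m generalizing x with
  | zero => exact hx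
  | succ m ih => exact ih (hK x hx)

theorem map_pow_le (hK : ∀ x ∈ K, σ x ∈ K) (m : ℕ) : K.map (σ ^ m).toRingHom ≤ K := by
  rintro _ ⟨x, hx, rfl⟩
  exact pow_apply_mem hK m hx

theorem monotone_map_inv_pow (hK : ∀ x ∈ K, σ x ∈ K) :
    Monotone fun m : ℕ => K.map (σ⁻¹ ^ m).toRingHom := by
  refine monotone_nat_of_le_succ fun m => ?_
  rintro _ ⟨x, hx, rfl⟩
  exact ⟨σ x, hK x hx, by simp [pow_succ]⟩

theorem map_inv_pow_zero : K.map (σ⁻¹ ^ 0).toRingHom = K := by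
  ext x
  simp [Subfield.mem_map]

theorem le_Kinv : K ≤ Kinv σ K :=
  map_inv_pow_zero.symm.le.trans (le_iSup (fun m => K.map (σ⁻¹ ^ m).toRingHom) 0)

theorem map_pow_map_inv_pow (m : ℕ) :
    (K.map (σ⁻¹ ^ m).toRingHom).map (σ ^ m).toRingHom = K := by
  ext x
  simp [Subfield.mem_map, inv_pow, -RingAut.coe_pow]

end InversiveClosure

section LimitDegree

variable [Field U] {σ : U ≃+* U} {K : Subfield U} {s : Set U}

theorem ldSeq_add_le_ldSeq {L : Subfield U} {m : ℕ} (hL : L.map (σ ^ m).toRingHom ≤ K)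
    (hs : s.Finite) (i : ℕ)
    (hint : ∀ x ∈ ⇑(σ ^ (i + 1)) '' s, IsIntegral (fAdj L (orbitSegment σ s i)) x) :
    ldSeq σ K s (m + i) ≤ ldSeq σ L s i := by
  have hle : (fAdj L (orbitSegment σ s i)).map (σ ^ m).toRingHom ≤
      fAdj K (orbitSegment σ s (m + i)) := by
    rw [map_fAdj]
    exact fAdj_mono hL (image_orbitSegment_subset σ s m i)
  have h := deg_image_le_of_map_le _ hle (hs.image _) hint
  rwa [RingEquiv.toRingHom_eq_coe, RingEquiv.coe_toRingHom, image_pow_image, ← add_assoc] at h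

theorem isIntegral_of_mem_image_pow_succ (hK : ∀ x ∈ K, σ x ∈ K)
    (hσs : ∀ x ∈ s, IsIntegral (fAdj K s) (σ x)) (m : ℕ) :
    ∀ x ∈ ⇑(σ ^ (m + 1)) '' s, IsIntegral (fAdj K (orbitSegment σ s m)) x := by
  rintro _ ⟨y, hy, rfl⟩
  have h := isIntegral_map (σ ^ m).toRingHom (hσs y hy)
  rw [map_fAdj] at h
  rw [pow_succ, RingAut.mul_apply]
  exact isIntegral_of_le (fAdj_mono (map_pow_le hK m)
    (image_pow_subset_orbitSegment σ s le_rfl)) h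

theorem deg_orbitSegment_pos (hK : ∀ x ∈ K, σ x ∈ K) (hs : s.Finite)
    (hσs : ∀ x ∈ s, IsIntegral (fAdj K s) (σ x)) (k : ℕ) :
    0 < deg (fAdj K s) (orbitSegment σ s k) := by
  rw [deg_orbitSegment_eq_prod]
  exact Finset.prod_pos fun i _ =>
    deg_pos (hs.image _) (isIntegral_of_mem_image_pow_succ hK hσs i)

theorem isIntegral_of_mem_orbitSegment (hK : ∀ x ∈ K, σ x ∈ K) (hs : s.Finite)
    (hσs : ∀ x ∈ s, IsIntegral (fAdj K s) (σ x)) {k : ℕ} {x : U}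
    (hx : x ∈ orbitSegment σ s k) : IsIntegral (fAdj K s) x :=
  isIntegral_of_mem_fAdj (deg_orbitSegment_pos hK hs hσs k) (subset_fAdj hx)

theorem ldSeq_pos_of_le (hK : ∀ x ∈ K, σ x ∈ K) (hs : s.Finite)
    (hσs : ∀ x ∈ s, IsIntegral (fAdj K s) (σ x)) {L : Subfield U} (hKL : K ≤ L) (i : ℕ) :
    0 < ldSeq σ L s i :=
  deg_pos (hs.image _) fun x hx =>
    isIntegral_of_le (fAdj_mono hKL subset_rfl) (isIntegral_of_mem_image_pow_succ hK hσs i x hx)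

theorem antitone_ldSeq (hK : ∀ x ∈ K, σ x ∈ K) (hs : s.Finite)
    (hσs : ∀ x ∈ s, IsIntegral (fAdj K s) (σ x)) : Antitone (ldSeq σ K s) := by
  refine antitone_nat_of_succ_le fun i => ?_
  rw [add_comm]
  exact ldSeq_add_le_ldSeq (map_pow_le hK 1) hs i (isIntegral_of_mem_image_pow_succ hK hσs i)

theorem exists_ldSeq_add_le_ldSeq_Kinv (hK : ∀ x ∈ K, σ x ∈ K) (hs : s.Finite)
    (hσs : ∀ x ∈ s, IsIntegral (fAdj K s) (σ x)) (i : ℕ) :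
    ∃ m, ldSeq σ K s (m + i) ≤ ldSeq σ (Kinv σ K) s i := by
  have hmono := monotone_map_inv_pow hK
  have hint : ∀ m, ∀ x ∈ ⇑(σ ^ (i + 1)) '' s,
      IsIntegral (fAdj (K.map (σ⁻¹ ^ m).toRingHom) (orbitSegment σ s i)) x := fun m x hx =>
    isIntegral_of_le (fAdj_mono (map_inv_pow_zero.symm.le.trans (hmono (Nat.zero_le m)))
      subset_rfl) (isIntegral_of_mem_image_pow_succ hK hσs i x hx)
  obtain ⟨m, hm⟩ := exists_deg_le_deg_iSup (fun _ _ h => fAdj_mono (hmono h) subset_rfl)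
    (hs.image _) (hint 0)
  rw [← fAdj_iSup] at hm
  exact ⟨m, (ldSeq_add_le_ldSeq (map_pow_map_inv_pow m).le hs i (hint m)).trans hm⟩

end LimitDegree

theorem exists_forall_ge_le_of_antitone {d e : ℕ → ℕ} (hd : Antitone d)
    (h : ∀ i, ∃ m, d (m + i) ≤ e i) : ∃ N, ∀ i, N ≤ i → d i ≤ e i := by
  refine ⟨Function.argmin d, fun i hi => ?_⟩
  obtain ⟨m, hm⟩ := h i
  exact (hd hi).trans ((Function.argmin_le d (m + i)).trans hm)

theorem prod_range_le_mul_prod_range {d e : ℕ → ℕ} {N : ℕ} (hd : ∀ i, 0 < d i)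
    (he : ∀ i, 0 < e i) (hde : ∀ i, N ≤ i → d i ≤ e i) (k : ℕ) :
    ∏ i ∈ Finset.range k, d i ≤ (∏ i ∈ Finset.range N, d i) * ∏ i ∈ Finset.range k, e i := by
  rw [← Finset.prod_filter_mul_prod_filter_not (Finset.range k) (· < N)]
  refine Nat.mul_le_mul ?_ ?_
  · refine Finset.prod_le_prod_of_subset_of_one_le' (fun i hi => ?_) fun i _ _ => hd i
    simp only [Finset.mem_filter, Finset.mem_range] at hi ⊢
    exact hi.2
  · calc ∏ i ∈ (Finset.range k).filter (¬ · < N), d i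
        ≤ ∏ i ∈ (Finset.range k).filter (¬ · < N), e i :=
          Finset.prod_le_prod' fun i hi => hde i (not_lt.mp (Finset.mem_filter.mp hi).2)
      _ ≤ ∏ i ∈ Finset.range k, e i :=
          Finset.prod_le_prod_of_subset_of_one_le' (Finset.filter_subset _ _) fun i _ _ => he i

theorem stmt2_general [Field U] (σ : U ≃+* U) (K : Subfield U)
    (hK : ∀ x ∈ K, σ x ∈ K) {n : ℕ} (a : Fin n → U)
    (ha : ∀ i, IsAlgebraic (fAdj K (Set.range a)) (σ (a i))) :
    ∃ D' : ℕ, ∀ k : ℕ, 0 < k →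
      ddSeq σ K (Set.range a) k ≤
        D' * deg (fAdj (Kinv σ K) (Set.range a)) (⇑(σ ^ k) '' Set.range a) := by
  set s := Set.range a
  have hs : s.Finite := Set.finite_range a
  have hσs : ∀ x ∈ s, IsIntegral (fAdj K s) (σ x) := by
    rintro _ ⟨i, rfl⟩
    exact (ha i).isIntegral
  obtain ⟨N, hN⟩ := exists_forall_ge_le_of_antitone (antitone_ldSeq hK hs hσs)
    (exists_ldSeq_add_le_ldSeq_Kinv hK hs hσs)
  refine ⟨∏ i ∈ Finset.range N, ldSeq σ K s i, fun k _ => ?_⟩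
  have hprod := prod_range_le_mul_prod_range (ldSeq_pos_of_le hK hs hσs le_rfl)
    (ldSeq_pos_of_le hK hs hσs le_Kinv) hN k
  rw [← deg_orbitSegment_eq_prod σ s K, ← deg_orbitSegment_eq_prod σ s (Kinv σ K),
    deg_orbitSegment_eq_ddSeq_mul σ s K, deg_orbitSegment_eq_ddSeq_mul σ s (Kinv σ K),
    ← mul_assoc] at hprod
  have hint : ∀ x ∈ orbitSegment σ s k, IsIntegral (fAdj K (s ∪ ⇑(σ ^ k) '' s)) x :=
    fun x hx => isIntegral_of_le (fAdj_mono le_rfl Set.subset_union_left)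
      (isIntegral_of_mem_orbitSegment hK hs hσs hx)
  have hKinv : fAdj K (s ∪ ⇑(σ ^ k) '' s) ≤ fAdj (Kinv σ K) (s ∪ ⇑(σ ^ k) '' s) :=
    fAdj_mono le_Kinv subset_rfl
  have hpos := deg_pos (orbitSegment_finite σ s hs k) fun x hx => isIntegral_of_le hKinv (hint x hx)
  have hle := deg_le_of_le hKinv (orbitSegment_finite σ s hs k) hint
  exact Nat.le_of_mul_le_mul_right ((Nat.mul_le_mul_left _ hle).trans hprod) hpos

/-- if `σ(K) ⊆ K` and `σ(a) ∈ K(a)^alg`, there is `D'` with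
`μ(σ^k(a)/K(a)) ≤ D'·μ(σ^k(a)/K^inv(a))` for all `k > 0`. -/
theorem stmt2 [Field U] [IsAlgClosed U] (σ : U ≃+* U) (K : Subfield U)
    (hK : ∀ x ∈ K, σ x ∈ K) {n : ℕ} (a : Fin n → U)
    (ha : ∀ i, IsAlgebraic (fAdj K (Set.range a)) (σ (a i))) :
    ∃ D' : ℕ, ∀ k : ℕ, 0 < k →
      ddSeq σ K (Set.range a) k ≤
        D' * deg (fAdj (Kinv σ K) (Set.range a)) (⇑(σ ^ k) '' Set.range a) :=
  stmt2_general σ K hK a ha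
end

section
/- Let K be a difference subfield of U with σ(K) = K and a a finite tuple with σ(a) ∈ K(a)^alg. For every n ≥ 1, the distant degree of a over K computed with respect to the automorphism σ^n equals the n-th power of the one computed for σ: lim_{k→∞} μ(σ^{nk}(a)/K(a))^{1/k} = dd(a/K)^n (in particular this limit exists). -/
/- Setting: a large algebraically closed field `U` with an automorphism `σ`.
   Tuples are maps `Fin n → U`; for a tuple `t`, the relevant set of coordinates
   is `Set.range t`.  `fAdj E s` is the subfield `E(s)` generated by a subfield
   `E` and a set `s`, and `deg E s` is the degree `μ(s/E) = [E(s):E]`. -/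

set_option maxHeartbeats 1000000
set_option synthInstance.maxHeartbeats 1000000

open Filter Set

variable {U : Type*}

/-! The sequence for `σ^m` is the subsequence `k ↦ μ(σ^{mk}(a)/K(a))` of the one for `σ`, and
`x_{mk}^{1/k} = (x_{mk}^{1/(mk)})^m`, so the limit of its `k`-th roots is `dd(a/K)^m`. -/

theorem ddSeq_pow [Field U] (σ : U ≃+* U) (K : Subfield U) (s : Set U) (m k : ℕ) :
    ddSeq (σ ^ m) K s k = ddSeq σ K s (m * k) := by
  rw [ddSeq, ddSeq, pow_mul]

theorem rpow_one_div_mul_eq_pow {x : ℝ} (hx : 0 ≤ x) {m : ℕ} (hm : m ≠ 0) (k : ℕ) :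
    x ^ (1 / (k : ℝ)) = (x ^ (1 / ((m * k : ℕ) : ℝ))) ^ m := by
  rw [← Real.rpow_natCast _ m, ← Real.rpow_mul hx]
  rcases eq_or_ne k 0 with rfl | hk
  · simp
  · push_cast
    field_simp

theorem tendsto_rpow_one_div_mul {x : ℕ → ℝ} (hx : ∀ k, 0 ≤ x k) {D : ℝ}
    (hD : Tendsto (fun k => x k ^ (1 / (k : ℝ))) atTop (nhds D)) {m : ℕ} (hm : m ≠ 0) :
    Tendsto (fun k => x (m * k) ^ (1 / (k : ℝ))) atTop (nhds (D ^ m)) := by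
  have hmul : Tendsto (fun k => m * k) atTop atTop :=
    tendsto_id.atTop_mul_const' (Nat.pos_of_ne_zero hm) |>.congr fun k => mul_comm k m
  refine ((hD.comp hmul).pow m).congr fun k => ?_
  exact (rpow_one_div_mul_eq_pow (hx _) hm k).symm

theorem stmt11_general [Field U] (σ : U ≃+* U) (K : Subfield U)
    {n : ℕ} (a : Fin n → U)
    (Da : ℝ)
    (hDa : Tendsto (fun k => (ddSeq σ K (Set.range a) k : ℝ) ^ (1 / (k : ℝ)))
      atTop (nhds Da)) :
    ∀ m : ℕ, 1 ≤ m →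
      Tendsto (fun k => (ddSeq (σ ^ m) K (Set.range a) k : ℝ) ^ (1 / (k : ℝ)))
        atTop (nhds (Da ^ m)) := by
  intro m hm
  simp only [ddSeq_pow]
  exact tendsto_rpow_one_div_mul (fun k => Nat.cast_nonneg _) hDa (by omega)

/-- for every `n ≥ 1`, the distant degree of `a` over `K`
computed for the automorphism `σ^n` equals `dd(a/K)^n`:
`lim_k μ(σ^{nk}(a)/K(a))^{1/k} = dd(a/K)^n` (in particular the limit exists). -/
theorem stmt11 [Field U] [IsAlgClosed U] (σ : U ≃+* U) (K : Subfield U)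
    (hK : K.map σ.toRingHom = K) {n : ℕ} (a : Fin n → U)
    (ha : ∀ i, IsAlgebraic (fAdj K (Set.range a)) (σ (a i)))
    (Da : ℝ)
    (hDa : Tendsto (fun k => (ddSeq σ K (Set.range a) k : ℝ) ^ (1 / (k : ℝ)))
      atTop (nhds Da)) :
    ∀ m : ℕ, 1 ≤ m →
      Tendsto (fun k => (ddSeq (σ ^ m) K (Set.range a) k : ℝ) ^ (1 / (k : ℝ)))
        atTop (nhds (Da ^ m)) :=
  stmt11_general σ K a Da hDa
end

section
/- Let G be a Hausdorff topological group, U a compact open subgroup of G, and V a compact subgroup of G such that the index [V : V ∩ U] equals N < ∞. Then there exists a compact open subgroup W₀ of G containing V with [W₀ : W₀ ∩ U] = N, which contains every subgroup with these properties: every compact subgroup W of G with V ⊆ W and [W : W ∩ U] = N satisfies W ⊆ W₀. -/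
/-!
Put `S = V * U`. For subgroups `V ≤ W`, the natural injection `V ⧸ (V ∩ U) ↪ W ⧸ (W ∩ U)` is
onto exactly when `W ⊆ S`; since `[V : V ∩ U]` is finite, `[W : W ∩ U] = [V : V ∩ U]` is therefore
equivalent to `W ⊆ S`. Every such `W` maps `S = VU` into `WU ⊆ SU = S`, so it lies in the
stabilizer `W₀` of `S` under left translation, and `W₀ ⊆ S` because `1 ∈ S`. As `S` is compact and
open, some neighbourhood `T` of `1` satisfies `T * S ⊆ S`; hence `W₀` is open, so closed, and
compact as a closed subset of `S`.
-/

open Pointwise MulAction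

namespace Subgroup

variable {α : Type*} [Group α]

theorem surjective_quotientSubgroupOfEmbeddingOfLE_iff (H : Subgroup α) {K L : Subgroup α}
    (hKL : K ≤ L) :
    Function.Surjective (quotientSubgroupOfEmbeddingOfLE H hKL) ↔ (L : Set α) ⊆ K * H := by
  constructor
  · intro hsurj l hl
    obtain ⟨q, hq⟩ := hsurj (QuotientGroup.mk ⟨l, hl⟩)
    induction q using QuotientGroup.induction_on with
    | H k =>
      rw [quotientSubgroupOfEmbeddingOfLE_apply_mk, QuotientGroup.eq, mem_subgroupOf] at hq
      exact ⟨k, k.2, (k : α)⁻¹ * l, by simpa using hq, mul_inv_cancel_left _ _⟩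
  · intro hsub q
    induction q using QuotientGroup.induction_on with
    | H l =>
      obtain ⟨k, hk, h, hh, hkh⟩ := hsub l.2
      refine ⟨QuotientGroup.mk ⟨k, hk⟩, ?_⟩
      rw [quotientSubgroupOfEmbeddingOfLE_apply_mk, QuotientGroup.eq, mem_subgroupOf]
      simpa [← hkh] using hh

theorem relIndex_eq_relIndex_iff_subset_mul {H K L : Subgroup α} (hKL : K ≤ L)
    (hK : H.relIndex K ≠ 0) : H.relIndex L = H.relIndex K ↔ (L : Set α) ⊆ K * H := by
  rw [← surjective_quotientSubgroupOfEmbeddingOfLE_iff H hKL]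
  have hinj := (quotientSubgroupOfEmbeddingOfLE H hKL).injective
  constructor
  · intro hLK
    have : Finite (L ⧸ H.subgroupOf L) := Nat.finite_of_card_ne_zero (by rw [← hLK] at hK; exact hK)
    exact ((Nat.bijective_iff_injective_and_card _).2 ⟨hinj, hLK.symm⟩).2
  · intro hsurj
    exact (Nat.card_eq_of_bijective _ ⟨hinj, hsurj⟩).symm

end Subgroup

section Stabilizer

variable {G : Type*} [Group G]

theorem mem_stabilizer_set_of_smul_subset {S : Set G} {g : G} (h : g • S ⊆ S)
    (hinv : g⁻¹ • S ⊆ S) : g ∈ stabilizer G S :=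
  mem_stabilizer_iff.2 (h.antisymm (Set.subset_smul_set_iff.2 hinv))

theorem coe_stabilizer_set_subset {S : Set G} (hS : (1 : G) ∈ S) :
    (stabilizer G S : Set G) ⊆ S := fun g hg => by
  rw [← mem_stabilizer_iff.1 hg]
  simpa using Set.smul_mem_smul_set (a := g) hS

theorem le_stabilizer_mul_of_coe_subset {H K W : Subgroup G} (hKW : K ≤ W)
    (hW : (W : Set G) ⊆ K * H) : W ≤ stabilizer G ((K : Set G) * H) := by
  refine (le_stabilizer_iff_smul_le _ W).2 fun g hg => ?_
  calc g • ((K : Set G) * H) = g • (K : Set G) * H := (smul_mul_assoc g _ _).symm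
    _ ⊆ (K : Set G) * H * H :=
      Set.mul_subset_mul_right (fun _ ⟨k, hk, hgk⟩ => hW (hgk ▸ W.mul_mem hg (hKW hk)))
    _ = (K : Set G) * H := by rw [mul_assoc, ← H.coe_toSubmonoid, H.toSubmonoid.coe_mul_self_eq]

variable [TopologicalSpace G] [IsTopologicalGroup G]

theorem IsCompact.isOpen_stabilizer_of_isOpen {S : Set G} (hSc : IsCompact S) (hSo : IsOpen S) :
    IsOpen (stabilizer G S : Set G) := by
  obtain ⟨T, hT, hTS⟩ := compact_open_separated_mul_left hSc hSo subset_rfl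
  refine Subgroup.isOpen_of_mem_nhds _ (g := 1) ?_
  filter_upwards [hT, inv_mem_nhds_one G hT] with g hg hg'
  exact mem_stabilizer_set_of_smul_subset ((Set.smul_set_subset_mul hg).trans hTS)
    ((Set.smul_set_subset_mul (a := g⁻¹) hg').trans hTS)

end Stabilizer

theorem stmt19_general {G : Type*} [Group G] [TopologicalSpace G] [IsTopologicalGroup G]
    (U V : Subgroup G) (hUc : IsCompact (U : Set G)) (hUo : IsOpen (U : Set G))
    (hVc : IsCompact (V : Set G)) (N : ℕ) (hNpos : 0 < N)
    (hN : Subgroup.relIndex U V = N) :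
    ∃ W₀ : Subgroup G, IsCompact (W₀ : Set G) ∧ IsOpen (W₀ : Set G) ∧ V ≤ W₀ ∧
      Subgroup.relIndex U W₀ = N ∧
      ∀ W : Subgroup G, IsCompact (W : Set G) → V ≤ W →
        Subgroup.relIndex U W = N → W ≤ W₀ := by
  set S : Set G := (V : Set G) * U
  have hSc : IsCompact S := hVc.mul hUc
  have hone : (1 : G) ∈ S := ⟨1, V.one_mem, 1, U.one_mem, mul_one 1⟩
  have hrel {W : Subgroup G} (hVW : V ≤ W) : U.relIndex W = N ↔ (W : Set G) ⊆ S := by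
    rw [← hN]
    exact Subgroup.relIndex_eq_relIndex_iff_subset_mul hVW (hN ▸ hNpos.ne')
  have hopen := hSc.isOpen_stabilizer_of_isOpen hUo.mul_left
  have hsub : (stabilizer G S : Set G) ⊆ S := coe_stabilizer_set_subset hone
  have hVW₀ : V ≤ stabilizer G S :=
    le_stabilizer_mul_of_coe_subset le_rfl fun v hv => ⟨v, hv, 1, U.one_mem, mul_one v⟩
  refine ⟨stabilizer G S, hSc.of_isClosed_subset (Subgroup.isClosed_of_isOpen _ hopen) hsub,
    hopen, hVW₀, (hrel hVW₀).2 hsub,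
    fun W _ hVW hW => le_stabilizer_mul_of_coe_subset hVW ((hrel hVW).1 hW)⟩

/-- in a Hausdorff topological group `G`, given a compact open
subgroup `U` and a compact subgroup `V` with `[V : V ∩ U] = N < ∞`, there is a
compact open subgroup `W₀ ⊇ V` with `[W₀ : W₀ ∩ U] = N` containing every
compact subgroup `W ⊇ V` with `[W : W ∩ U] = N`.  Here `[W : W ∩ U]` is the
relative index `Subgroup.relIndex U W` (which is `0` when infinite). -/
theorem stmt19 {G : Type*} [Group G] [TopologicalSpace G] [IsTopologicalGroup G] [T2Space G]
    (U V : Subgroup G) (hUc : IsCompact (U : Set G)) (hUo : IsOpen (U : Set G))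
    (hVc : IsCompact (V : Set G)) (N : ℕ) (hNpos : 0 < N)
    (hN : Subgroup.relIndex U V = N) :
    ∃ W₀ : Subgroup G, IsCompact (W₀ : Set G) ∧ IsOpen (W₀ : Set G) ∧ V ≤ W₀ ∧
      Subgroup.relIndex U W₀ = N ∧
      ∀ W : Subgroup G, IsCompact (W : Set G) → V ≤ W →
        Subgroup.relIndex U W = N → W ≤ W₀ :=
  stmt19_general U V hUc hUo hVc N hNpos hN
end
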